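/- (Theorem 1, pressure component.) Fix x* > 0, a fixed observation time t > 0, and a sensor location x_m with 0 < x_m ≤ x*. Then the map u ↦ p^u(x_m, min(t, τ*_u)), from the space C([0,x*], ℝ) of continuous real-valued functions on [0,x*] equipped with the supremum metric to ℝ, is continuous. -/

import Mathlib

open Set

noncomputable def Fu (xs : ℝ) (h : 0 ≤ xs) (u : C(Icc (0:ℝ) xs, ℝ)) (x : ℝ) : ℝ :=
  ∫ z in (0:ℝ)..x, Real.exp (-(u (projIcc 0 xs h z)))

noncomputable def Wu (xs : ℝ) (h : 0 ≤ xs) (u : C(Icc (0:ℝ) xs, ℝ)) (x : ℝ) : ℝ :=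
  ∫ ξ in (0:ℝ)..x, Fu xs h u ξ

noncomputable def tau (xs : ℝ) (h : 0 ≤ xs) (u : C(Icc (0:ℝ) xs, ℝ)) : ℝ :=
  Wu xs h u xs

/-- The moving front `Υ^u = W_u⁻¹`: since `W_u` is continuous and strictly increasing
on `[0,x*]`, for `t ∈ [0,τ*_u]` the set below is a singleton and `front` is its element. -/
noncomputable def front (xs : ℝ) (h : 0 ≤ xs) (u : C(Icc (0:ℝ) xs, ℝ)) (t : ℝ) : ℝ :=
  sInf {x : ℝ | x ∈ Icc 0 xs ∧ Wu xs h u x = t}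

/-- Dimensionless pressure: `p^u(x,t) = 2 - F_u(x)/F_u(Υ^u(t))` for `x ≤ Υ^u(t)`,
and `1` ahead of the front. -/
noncomputable def press (xs : ℝ) (h : 0 ≤ xs) (u : C(Icc (0:ℝ) xs, ℝ)) (x t : ℝ) : ℝ :=
  if x ≤ front xs h u t then 2 - Fu xs h u x / Fu xs h u (front xs h u t) else 1

/-! With `s_u = min(t, τ*_u) > 0`, the pressure at the sensor is
`max 1 (2 - F_u(x_m) / F_u(Υ^u(s_u)))`: the two branches of `press` agree at the front.
Parametric integrals depend continuously on their parameter, so `(u, x) ↦ F_u(x)` and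
`(u, x) ↦ W_u(x)` are jointly continuous, hence so is `u ↦ s_u`. The front `Υ^u(s_u)` is the
root in `[0, x*]` of the strictly increasing equation `W_u(x) = s_u`, and such a root depends
continuously on the parameter: if `x < Υ^{u₀}(s_{u₀})` then `W_{u₀}(x) < s_{u₀}`, an open
condition in `u` that forces `x < Υ^u(s_u)`. -/

theorem continuous_implicit_of_strictMonoOn {X : Type*} [TopologicalSpace X]
    {G : X → ℝ → ℝ} (hG : Continuous (Function.uncurry G)) {a b : ℝ}
    (hmono : ∀ u, StrictMonoOn (G u) (Icc a b)) {y c : X → ℝ} (hy : ∀ u, y u ∈ Icc a b)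
    (hc : Continuous c) (hGy : ∀ u, G u (y u) = c u) : Continuous y := by
  have hG_at : ∀ x, Continuous fun u => G u x := fun x =>
    hG.comp (continuous_id.prodMk continuous_const)
  refine continuous_iff_continuousAt.2 fun u₀ =>
    tendsto_order.2 ⟨fun x hx => ?_, fun x hx => ?_⟩
  · rcases lt_or_ge x a with hxa | hax
    · exact Filter.Eventually.of_forall fun u => hxa.trans_le (hy u).1
    have hxI : x ∈ Icc a b := ⟨hax, hx.le.trans (hy u₀).2⟩
    have hlt : G u₀ x < c u₀ := hGy u₀ ▸ hmono u₀ hxI (hy u₀) hx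
    filter_upwards [(hG_at x).continuousAt.eventually_lt hc.continuousAt hlt] with u hu
    exact ((hmono u).lt_iff_lt hxI (hy u)).1 (hGy u ▸ hu)
  · rcases lt_or_ge b x with hbx | hxb
    · exact Filter.Eventually.of_forall fun u => (hy u).2.trans_lt hbx
    have hxI : x ∈ Icc a b := ⟨(hy u₀).1.trans hx.le, hxb⟩
    have hlt : c u₀ < G u₀ x := hGy u₀ ▸ hmono u₀ (hy u₀) hxI hx
    filter_upwards [hc.continuousAt.eventually_lt (hG_at x).continuousAt hlt] with u hu
    exact ((hmono u).lt_iff_lt (hy u) hxI).1 (hGy u ▸ hu)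

section

variable {xs : ℝ} {h : 0 ≤ xs}

theorem continuous_uncurry_Fu :
    Continuous fun p : C(Icc (0:ℝ) xs, ℝ) × ℝ => Fu xs h p.1 p.2 :=
  intervalIntegral.continuous_parametric_primitive_of_continuous
    (f := fun (u : C(Icc (0:ℝ) xs, ℝ)) z => Real.exp (-(u (projIcc 0 xs h z))))
    (by fun_prop)

theorem continuous_uncurry_Wu :
    Continuous fun p : C(Icc (0:ℝ) xs, ℝ) × ℝ => Wu xs h p.1 p.2 :=
  intervalIntegral.continuous_parametric_primitive_of_continuous continuous_uncurry_Fu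

theorem continuous_Fu (u : C(Icc (0:ℝ) xs, ℝ)) : Continuous (Fu xs h u) :=
  continuous_uncurry_Fu.comp (continuous_const.prodMk continuous_id)

theorem continuous_Wu (u : C(Icc (0:ℝ) xs, ℝ)) : Continuous (Wu xs h u) :=
  continuous_uncurry_Wu.comp (continuous_const.prodMk continuous_id)

theorem continuous_tau : Continuous (tau xs h) :=
  continuous_uncurry_Wu.comp (continuous_id.prodMk continuous_const)

theorem Fu_strictMono (u : C(Icc (0:ℝ) xs, ℝ)) : StrictMono (Fu xs h u) := by
  intro a b hab
  have hint : ∀ a b : ℝ, IntervalIntegrable (fun z => Real.exp (-(u (projIcc 0 xs h z))))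
      MeasureTheory.volume a b := fun a b => (by fun_prop : Continuous _).intervalIntegrable a b
  have hpos := intervalIntegral.intervalIntegral_pos_of_pos (hint a b)
    (fun _ => Real.exp_pos _) hab
  rw [← intervalIntegral.integral_interval_sub_left (hint 0 b) (hint 0 a)] at hpos
  exact sub_pos.1 hpos

theorem Wu_zero (u : C(Icc (0:ℝ) xs, ℝ)) : Wu xs h u 0 = 0 :=
  intervalIntegral.integral_same

theorem Fu_pos (u : C(Icc (0:ℝ) xs, ℝ)) {x : ℝ} (hx : 0 < x) : 0 < Fu xs h u x := by
  simpa [Fu] using Fu_strictMono u hx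

theorem Wu_strictMonoOn (u : C(Icc (0:ℝ) xs, ℝ)) : StrictMonoOn (Wu xs h u) (Ici 0) := by
  intro a ha b _ hab
  have hint : ∀ a b : ℝ, IntervalIntegrable (Fu xs h u) MeasureTheory.volume a b :=
    (continuous_Fu u).intervalIntegrable
  have hpos := intervalIntegral.intervalIntegral_pos_of_pos_on (hint a b)
    (fun x hx => Fu_pos u ((mem_Ici.1 ha).trans_lt hx.1)) hab
  rw [← intervalIntegral.integral_interval_sub_left (hint 0 b) (hint 0 a)] at hpos
  exact sub_pos.1 hpos

theorem tau_pos (hxs : 0 < xs) (u : C(Icc (0:ℝ) xs, ℝ)) : 0 < tau xs h u := by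
  have := Wu_strictMonoOn (h := h) u self_mem_Ici hxs.le hxs
  rwa [Wu_zero] at this

theorem front_spec (u : C(Icc (0:ℝ) xs, ℝ)) {s : ℝ} (hs0 : 0 ≤ s) (hs : s ≤ tau xs h u) :
    front xs h u s ∈ {x : ℝ | x ∈ Icc 0 xs ∧ Wu xs h u x = s} := by
  have hne : {x : ℝ | x ∈ Icc 0 xs ∧ Wu xs h u x = s}.Nonempty :=
    intermediate_value_Icc h (continuous_Wu u).continuousOn ⟨(Wu_zero u).symm ▸ hs0, hs⟩
  exact (isClosed_Icc.inter (isClosed_eq (continuous_Wu u) continuous_const)).csInf_mem hne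
    ⟨0, fun _ hx => hx.1.1⟩

theorem front_pos (u : C(Icc (0:ℝ) xs, ℝ)) {s : ℝ} (hs0 : 0 < s) (hs : s ≤ tau xs h u) :
    0 < front xs h u s := by
  obtain ⟨⟨hnonneg, -⟩, hWs⟩ := front_spec u hs0.le hs
  refine hnonneg.lt_of_ne fun hzero => hs0.ne' ?_
  rw [← hWs, ← hzero, Wu_zero]

theorem press_eq_max (u : C(Icc (0:ℝ) xs, ℝ)) (x : ℝ) {s : ℝ} (hs : 0 < front xs h u s) :
    press xs h u x s = max 1 (2 - Fu xs h u x / Fu xs h u (front xs h u s)) := by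
  have hF : 0 < Fu xs h u (front xs h u s) := Fu_pos u hs
  unfold press
  split_ifs with hx
  · have : Fu xs h u x / Fu xs h u (front xs h u s) ≤ 1 :=
      (div_le_one hF).2 ((Fu_strictMono u).monotone hx)
    rw [max_eq_right (by linarith)]
  · have : 1 < Fu xs h u x / Fu xs h u (front xs h u s) :=
      (one_lt_div hF).2 (Fu_strictMono u (not_le.1 hx))
    rw [max_eq_left (by linarith)]

end

theorem stmt_16_general (xs : ℝ) (hxs : 0 < xs) (t : ℝ) (ht : 0 < t)
    (xm : ℝ) :
    Continuous fun u : C(Icc (0:ℝ) xs, ℝ) =>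
      press xs hxs.le u xm (min t (tau xs hxs.le u)) := by
  set s := fun u => min t (tau xs hxs.le u)
  have hs_pos : ∀ u, 0 < s u := fun u => lt_min ht (tau_pos hxs u)
  have hs_le : ∀ u, s u ≤ tau xs hxs.le u := fun u => min_le_right _ _
  have hfront_pos : ∀ u, 0 < front xs hxs.le u (s u) :=
    fun u => front_pos u (hs_pos u) (hs_le u)
  have hfront : Continuous fun u => front xs hxs.le u (s u) :=
    continuous_implicit_of_strictMonoOn continuous_uncurry_Wu
      (fun u => (Wu_strictMonoOn u).mono Icc_subset_Ici_self)
      (fun u => (front_spec u (hs_pos u).le (hs_le u)).1) (continuous_const.min continuous_tau)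
      (fun u => (front_spec u (hs_pos u).le (hs_le u)).2)
  have hFu_front : Continuous fun u => Fu xs hxs.le u (front xs hxs.le u (s u)) :=
    continuous_uncurry_Fu.comp (continuous_id.prodMk hfront)
  have hFu_xm : Continuous fun u : C(Icc (0:ℝ) xs, ℝ) => Fu xs hxs.le u xm :=
    continuous_uncurry_Fu.comp (continuous_id.prodMk continuous_const)
  refine Continuous.congr ?_ fun u => (press_eq_max u xm (hfront_pos u)).symm
  exact continuous_const.max (continuous_const.sub
    (hFu_xm.div hFu_front fun u => (Fu_pos u (hfront_pos u)).ne'))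

/-- Theorem 1, pressure component: for a fixed observation time `t > 0`
and sensor location `0 < x_m ≤ x*`, the map `u ↦ p^u(x_m, min(t, τ*_u))` is continuous
on `C([0,x*], ℝ)` with the sup metric. -/
theorem stmt_16 (xs : ℝ) (hxs : 0 < xs) (t : ℝ) (ht : 0 < t)
    (xm : ℝ) (hxm0 : 0 < xm) (hxm : xm ≤ xs) :
    Continuous fun u : C(Icc (0:ℝ) xs, ℝ) =>
      press xs hxs.le u xm (min t (tau xs hxs.le u)) :=
  stmt_16_general xs hxs t ht xm
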